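/- Let n ≥ 3 and let ψ₁,…,ψₙ be unit vectors in ℂ^d with Δ(ψ₁,…,ψₙ) ≠ 0. Then there exist a positive integer d′ and unit vectors φ₁,…,φₙ in ℂ^{d′} such that: (i) the Gram matrix G(φ₁,…,φₙ) is a circulant matrix; in particular ⟪φ₁,φ₂⟫ = ⟪φ₂,φ₃⟫ = ⋯ = ⟪φ_{n−1},φₙ⟫ = ⟪φₙ,φ₁⟫; and (ii) there exists a real number c with 0 < c ≤ 1 such that Δ(ψ₁,…,ψₙ) = c · Δ(φ₁,…,φₙ) (so the two Bargmann invariants have the same argument and |Δ(ψ₁,…,ψₙ)| ≤ |Δ(φ₁,…,φₙ)|). -/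

import Mathlib

/-!
Multiplying each `ψₖ` by a unit complex number leaves `Δ` unchanged, and the phases can be
chosen so that all consecutive inner products `⟪ψₖ, ψₖ₊₁⟫` have the same argument. The vectors
`φₖ = n^{-1/2} (ψ_{k+j})ⱼ` in the direct sum of `n` copies of `ℂ^d` have a circulant Gram matrix,
and `⟪φₖ, φₖ₊₁⟫` is the arithmetic mean of the `⟪ψⱼ, ψⱼ₊₁⟫`. As these lie on a common ray,
AM-GM gives `Δ(ψ) = c Δ(φ)` with `0 < c ≤ 1`.
-/

open Finset

theorem Fin.partialSum_last {M : Type*} [AddCommMonoid M] {m : ℕ} (f : Fin m → M) :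
    Fin.partialSum f (Fin.last m) = ∑ i, f i := by
  simp only [Fin.partialSum, Fin.val_last]
  rw [List.take_of_length_le (by simp), List.sum_ofFn]

theorem Fin.exists_add_one_sub_eq_of_sum_eq_zero {M : Type*} [AddCommGroup M] {n : ℕ}
    [NeZero n] (θ : Fin n → M) (hθ : ∑ k, θ k = 0) :
    ∃ α : Fin n → M, ∀ k, α (k + 1) - α k = θ k := by
  obtain ⟨m, rfl⟩ := Nat.exists_eq_succ_of_ne_zero (NeZero.ne n)
  refine ⟨fun k => Fin.partialSum θ k.castSucc, fun k => ?_⟩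
  induction k using Fin.lastCases with
  | last =>
    have h := Fin.partialSum_succ θ (Fin.last m)
    rw [Fin.succ_last, Fin.partialSum_last, hθ] at h
    simp only [Fin.last_add_one, Fin.castSucc_zero, Fin.partialSum_zero]
    rw [zero_sub, neg_eq_iff_add_eq_zero, h]
  | cast j =>
    simp only [Fin.coeSucc_eq_succ, ← Fin.succ_castSucc, Fin.partialSum_succ,
      add_sub_cancel_left]

theorem Real.prod_le_mean_pow {ι : Type*} [Fintype ι] (z : ι → ℝ) (hz : ∀ i, 0 ≤ z i) :
    ∏ i, z i ≤ ((∑ i, z i) / Fintype.card ι) ^ Fintype.card ι := by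
  cases isEmpty_or_nonempty ι
  · simp
  have h := Real.geom_mean_le_arith_mean univ (fun _ => 1) z (fun _ _ => zero_le_one)
    (by simpa using Fintype.card_pos) (fun i _ => hz i)
  simp only [Real.rpow_one, sum_const, card_univ, nsmul_eq_mul, mul_one, one_mul] at h
  have hprod : 0 ≤ ∏ i, z i := prod_nonneg fun i _ => hz i
  calc ∏ i, z i = ((∏ i, z i) ^ ((Fintype.card ι : ℝ)⁻¹)) ^ Fintype.card ι :=
        (Real.rpow_inv_natCast_pow hprod Fintype.card_ne_zero).symm
    _ ≤ _ := pow_le_pow_left₀ (Real.rpow_nonneg hprod _) h _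

theorem exists_prod_eq_mul_mean_pow {ι : Type*} [Fintype ι] [Nonempty ι] (ω : ℂ) (r : ι → ℝ)
    (hr : ∀ i, 0 < r i) : ∃ c : ℝ, 0 < c ∧ c ≤ 1 ∧
      ∏ i, ω * r i = c * ((Fintype.card ι : ℂ)⁻¹ * ∑ i, ω * r i) ^ Fintype.card ι := by
  set M := (∑ i, r i) / Fintype.card ι
  have hM : 0 < M :=
    div_pos (sum_pos (fun i _ => hr i) univ_nonempty) (Nat.cast_pos.2 Fintype.card_pos)
  have hMn : 0 < M ^ Fintype.card ι := pow_pos hM _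
  refine ⟨(∏ i, r i) / M ^ Fintype.card ι, div_pos (prod_pos fun i _ => hr i) hMn,
    (div_le_one hMn).2 (Real.prod_le_mean_pow r fun i => (hr i).le), ?_⟩
  have hmean : (Fintype.card ι : ℂ)⁻¹ * ∑ i, ω * r i = ω * M := by
    simp only [M]
    push_cast
    rw [← mul_sum, div_eq_inv_mul, mul_left_comm]
  have hMn' : ((M ^ Fintype.card ι : ℝ) : ℂ) ≠ 0 := by exact_mod_cast hMn.ne'
  rw [hmean, prod_mul_distrib, prod_const, card_univ, mul_pow, Complex.ofReal_div,
    ← Complex.ofReal_prod]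
  push_cast at hMn' ⊢
  field_simp

section InnerProductSpace

variable {𝕜 E : Type*} [RCLike 𝕜] [NormedAddCommGroup E] [InnerProductSpace 𝕜 E] {n : ℕ}

variable (𝕜) in
noncomputable def cyclicAverage (v : Fin n → E) (k : Fin n) : PiLp 2 (fun _ : Fin n => E) :=
  ((√n : ℝ) : 𝕜)⁻¹ • WithLp.toLp 2 fun j => v (k + j)

theorem inner_cyclicAverage (v : Fin n → E) (p q : Fin n) :
    inner 𝕜 (cyclicAverage 𝕜 v p) (cyclicAverage 𝕜 v q) =
      (n : 𝕜)⁻¹ * ∑ j, inner 𝕜 (v (p + j)) (v (q + j)) := by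
  have hsqrt : ((√n : ℝ) : 𝕜)⁻¹ * ((√n : ℝ) : 𝕜)⁻¹ = (n : 𝕜)⁻¹ := by
    rw [← mul_inv, ← RCLike.ofReal_mul, Real.mul_self_sqrt n.cast_nonneg, RCLike.ofReal_natCast]
  simp only [cyclicAverage, inner_smul_left, inner_smul_right, PiLp.inner_apply,
    RCLike.conj_inv, RCLike.conj_ofReal, ← mul_assoc, hsqrt]

variable [NeZero n]

theorem inner_cyclicAverage_eq_sum_add_sub (v : Fin n → E) (p q : Fin n) :
    inner 𝕜 (cyclicAverage 𝕜 v p) (cyclicAverage 𝕜 v q) =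
      (n : 𝕜)⁻¹ * ∑ j, inner 𝕜 (v j) (v (j + (q - p))) := by
  rw [inner_cyclicAverage, ← Equiv.sum_comp (Equiv.addLeft p)
    (fun j => inner 𝕜 (v j) (v (j + (q - p))))]
  simp only [Equiv.coe_addLeft, add_right_comm p _ (q - p), add_sub_cancel]

theorem inner_cyclicAverage_add_one (v : Fin n → E) (k : Fin n) :
    inner 𝕜 (cyclicAverage 𝕜 v k) (cyclicAverage 𝕜 v (k + 1)) =
      (n : 𝕜)⁻¹ * ∑ j, inner 𝕜 (v j) (v (j + 1)) := by
  rw [inner_cyclicAverage_eq_sum_add_sub, add_sub_cancel_left]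

theorem norm_cyclicAverage {v : Fin n → E} (hv : ∀ j, ‖v j‖ = 1) (k : Fin n) :
    ‖cyclicAverage 𝕜 v k‖ = 1 := by
  have hn : (0 : ℝ) < n := Nat.cast_pos.2 (Nat.pos_of_neZero n)
  rw [cyclicAverage, norm_smul, norm_inv, RCLike.norm_ofReal,
    abs_of_nonneg (Real.sqrt_nonneg _), PiLp.norm_eq_of_L2]
  simp [hv, (Real.sqrt_pos.2 hn).ne']

variable (𝕜) in
def bargmannInvariant (ψ : Fin n → E) : 𝕜 :=
  ∏ k, inner 𝕜 (ψ k) (ψ (k + 1))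

theorem bargmannInvariant_smul_of_norm_eq_one {u : Fin n → 𝕜} (hu : ∀ k, ‖u k‖ = 1)
    (ψ : Fin n → E) : bargmannInvariant 𝕜 (fun k => u k • ψ k) = bargmannInvariant 𝕜 ψ := by
  have hcycle : ∏ k, starRingEnd 𝕜 (u k) * u (k + 1) = 1 := by
    rw [prod_mul_distrib, Fintype.prod_equiv (Equiv.addRight 1) (fun k => u (k + 1)) u
      fun _ => rfl, ← prod_mul_distrib]
    simp [RCLike.conj_mul, hu]
  calc ∏ k, inner 𝕜 (u k • ψ k) (u (k + 1) • ψ (k + 1))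
      = ∏ k, starRingEnd 𝕜 (u k) * u (k + 1) * inner 𝕜 (ψ k) (ψ (k + 1)) :=
        Fintype.prod_congr _ _ fun k => by rw [inner_smul_left, inner_smul_right, mul_assoc]
    _ = bargmannInvariant 𝕜 ψ := by rw [prod_mul_distrib, hcycle, one_mul, bargmannInvariant]

end InnerProductSpace

open Complex in
theorem exists_phases_inner_add_one_eq_mul_norm {E : Type*} [NormedAddCommGroup E]
    [InnerProductSpace ℂ E] {n : ℕ} [NeZero n] (ψ : Fin n → E) :
    ∃ u : Fin n → ℂ, (∀ k, ‖u k‖ = 1) ∧ ∃ ω : ℂ, ∀ k,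
      inner ℂ (u k • ψ k) (u (k + 1) • ψ (k + 1)) = ω * ‖inner ℂ (ψ k) (ψ (k + 1))‖ := by
  set a : Fin n → ℂ := fun k => inner ℂ (ψ k) (ψ (k + 1))
  set τ : ℝ := (∑ k, (a k).arg) / n
  have hθ : ∑ k, (τ - (a k).arg) = 0 := by
    rw [sum_sub_distrib, sum_const, card_univ, Fintype.card_fin, nsmul_eq_mul, sub_eq_zero]
    exact mul_div_cancel₀ _ (Nat.cast_ne_zero.2 (NeZero.ne n))
  obtain ⟨α, hα⟩ := Fin.exists_add_one_sub_eq_of_sum_eq_zero _ hθ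
  refine ⟨fun k => exp (α k * I), fun k => norm_exp_ofReal_mul_I _, exp (τ * I), fun k => ?_⟩
  calc inner ℂ (exp (α k * I) • ψ k) (exp (α (k + 1) * I) • ψ (k + 1))
      = exp (↑(α (k + 1) - α k) * I) * a k := by
        rw [inner_smul_left, inner_smul_right, ← exp_conj, ← mul_assoc, ← exp_add]
        simp only [a, map_mul, conj_ofReal, conj_I]
        push_cast
        ring_nf
    _ = exp (τ * I) * ‖a k‖ := by
        conv_lhs => rw [← norm_mul_exp_arg_mul_I (a k)]
        rw [mul_left_comm, ← exp_add, hα, ← add_mul, ← ofReal_add, sub_add_cancel, mul_comm]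

/-- Lifting a nonzero Bargmann invariant to one with a circulant Gram matrix:
given unit vectors `ψ₁, …, ψₙ` in `ℂ^d` with `Δ(ψ₁,…,ψₙ) ≠ 0`, there are unit vectors
`φ₁, …, φₙ` in some `ℂ^{d'}` whose Gram matrix is circulant (in particular all
consecutive inner products are equal) and a real `c` with `0 < c ≤ 1` such that
`Δ(ψ₁,…,ψₙ) = c · Δ(φ₁,…,φₙ)`. -/
theorem exists_circulant_gram_with_same_phase {n d : ℕ} (hn : 3 ≤ n)
    (ψ : Fin n → EuclideanSpace ℂ (Fin d)) (hψ : ∀ k, ‖ψ k‖ = 1)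
    (hΔ : (∏ k : Fin n, (inner ℂ (ψ k) (ψ (k + ⟨1, by omega⟩)) : ℂ)) ≠ 0) :
    ∃ d' : ℕ, 0 < d' ∧ ∃ φ : Fin n → EuclideanSpace ℂ (Fin d'),
      (∀ k, ‖φ k‖ = 1) ∧
      (∃ z : Fin n → ℂ, ∀ i j : Fin n, (inner ℂ (φ i) (φ j) : ℂ) = z (j - i)) ∧
      (∀ k : Fin n, (inner ℂ (φ k) (φ (k + ⟨1, by omega⟩)) : ℂ) =
        (inner ℂ (φ ⟨0, by omega⟩) (φ ⟨1, by omega⟩) : ℂ)) ∧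
      (∃ c : ℝ, 0 < c ∧ c ≤ 1 ∧
        (∏ k : Fin n, (inner ℂ (ψ k) (ψ (k + ⟨1, by omega⟩)) : ℂ)) =
          (c : ℂ) * ∏ k : Fin n, (inner ℂ (φ k) (φ (k + ⟨1, by omega⟩)) : ℂ)) := by
  have : NeZero n := ⟨by omega⟩
  have h1 : (⟨1, by omega⟩ : Fin n) = 1 :=
    Fin.ext (by rw [Fin.val_one', Nat.mod_eq_of_lt (by omega)])
  simp only [h1, show (⟨0, by omega⟩ : Fin n) = 0 from rfl] at hΔ ⊢
  obtain ⟨u, hu, ω, hω⟩ := exists_phases_inner_add_one_eq_mul_norm ψ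
  let w k := u k • ψ k
  have hw : ∀ k, ‖w k‖ = 1 := fun k => by rw [norm_smul, hu, hψ, one_mul]
  obtain ⟨c, hc0, hc1, hc⟩ := exists_prod_eq_mul_mean_pow ω _ fun k =>
    norm_pos_iff.2 fun h => hΔ (prod_eq_zero (mem_univ k) h)
  let b := stdOrthonormalBasis ℂ (PiLp 2 fun _ : Fin n => EuclideanSpace ℂ (Fin d))
  let φ k := b.repr (cyclicAverage ℂ w k)
  have hφ (i j) : inner ℂ (φ i) (φ j) = inner ℂ (cyclicAverage ℂ w i) (cyclicAverage ℂ w j) :=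
    b.repr.inner_map_map _ _
  have hφ1 (k) : ‖φ k‖ = 1 := by rw [b.repr.norm_map, norm_cyclicAverage hw]
  refine ⟨_, Module.finrank_pos_iff_exists_ne_zero.2 ⟨_, norm_ne_zero_iff.1
      ((norm_cyclicAverage (𝕜 := ℂ) hw 0).trans_ne one_ne_zero)⟩,
    φ, hφ1, ⟨fun m => (n : ℂ)⁻¹ * ∑ j, inner ℂ (w j) (w (j + m)),
      fun i j => (hφ i j).trans (inner_cyclicAverage_eq_sum_add_sub w i j)⟩,
    fun k => by simp only [hφ, inner_cyclicAverage_eq_sum_add_sub, add_sub_cancel_left, sub_zero],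
    c, hc0, hc1, ?_⟩
  calc ∏ k, inner ℂ (ψ k) (ψ (k + 1)) = bargmannInvariant ℂ w :=
        (bargmannInvariant_smul_of_norm_eq_one hu ψ).symm
    _ = c * ((n : ℂ)⁻¹ * ∑ j, inner ℂ (w j) (w (j + 1))) ^ n := by
        simp only [bargmannInvariant, w, hω, hc, Fintype.card_fin]
    _ = c * ∏ k, inner ℂ (φ k) (φ (k + 1)) := by
        simp only [hφ, inner_cyclicAverage_add_one, prod_const, card_univ, Fintype.card_fin]
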